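/- Let a > 0 and c > 0, and let ϑ and ϑ' be independent real random variables each with law Inv-Ga(a, 1). Then the law of the product c·ϑ·ϑ' has density on (0, ∞) given by θ ↦ (c^a / Γ(a)²) · θ^{−a−1} · ∫_0^∞ x^{−1} · e^{−c/x − x/θ} dx; that is, for every θ > 0, P(c·ϑ·ϑ' ≤ θ) = ∫_0^θ (c^a / Γ(a)²) · t^{−a−1} · (∫_0^∞ x^{−1} e^{−c/x − x/t} dx) dt. -/

import Mathlib

open MeasureTheory ProbabilityTheory Real Filter Set

/-- Density of the inverse gamma distribution `Inv-Ga(a, b)`: equal to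
`b^a / Γ(a) · x^{-(a+1)} · e^{-b/x}` for `x > 0` and `0` otherwise. -/
noncomputable def invGammaPDF (a b : ℝ) (x : ℝ) : ℝ :=
  if 0 < x then b ^ a / Real.Gamma a * x ^ (-(a + 1)) * Real.exp (-b / x) else 0

/-- The inverse gamma distribution `Inv-Ga(a, b)` as a measure on `ℝ`. -/
noncomputable def invGammaMeasure (a b : ℝ) : Measure ℝ :=
  MeasureTheory.volume.withDensity (fun x => ENNReal.ofReal (invGammaPDF a b x))

/-!
By independence, `P(c ϑ ϑ' ≤ θ)` is the product measure of `{(x, y) | c x y ≤ θ}`. Integrating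
first in `y`, substituting `y = t / (c x)` and applying Tonelli turns it into
`∫_0^θ ∫_0^∞ f(x) f(t/(cx)) (cx)⁻¹ dx dt`, with `f` the `Inv-Ga(a, 1)` density. For fixed `t`
the powers of `x` in the inner integrand collapse to `c^a t^{-a-1} x⁻¹`, leaving
`x⁻¹ e^{-1/x - cx/t}`, and the substitution `u = c x` gives the stated inner integral.
-/

open scoped ENNReal

lemma ProbabilityTheory.IndepFun.measure_preimage_pair {Ω α β : Type*} {mΩ : MeasurableSpace Ω}
    {mα : MeasurableSpace α} {mβ : MeasurableSpace β} {μ : Measure Ω} [IsFiniteMeasure μ]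
    {X : Ω → α} {Y : Ω → β} (hXY : IndepFun X Y μ) (hX : Measurable X) (hY : Measurable Y)
    {S : Set (α × β)} (hS : MeasurableSet S) :
    μ ((fun ω => (X ω, Y ω)) ⁻¹' S) = ((μ.map X).prod (μ.map Y)) S := by
  rw [← (indepFun_iff_map_prod_eq_prod_map_map hX.aemeasurable hY.aemeasurable).1 hXY,
    Measure.map_apply (hX.prodMk hY) hS]

lemma setLIntegral_comp_mul_left (g : ℝ → ℝ≥0∞) {k : ℝ} (hk : 0 < k) (s : Set ℝ) :
    ∫⁻ t in (k * ·) ⁻¹' s, g (k * t) = ENNReal.ofReal k⁻¹ * ∫⁻ y in s, g y := by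
  have hemb := measurableEmbedding_mulLeft₀ hk.ne'
  rw [← hemb.lintegral_map, ← hemb.restrict_map, Real.map_volume_mul_left hk.ne',
    Measure.restrict_smul, lintegral_smul_measure, abs_of_pos (inv_pos.2 hk), smul_eq_mul]

lemma withDensity_setOf_mul_le (g : ℝ → ℝ≥0∞) {k : ℝ} (hk : 0 < k) (θ : ℝ) :
    volume.withDensity g {y | k * y ≤ θ} = ENNReal.ofReal k⁻¹ * ∫⁻ t in Iic θ, g (k⁻¹ * t) := by
  have hpre : (k⁻¹ * ·) ⁻¹' {y | k * y ≤ θ} = Iic θ := by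
    ext t
    simp [hk.ne']
  rw [withDensity_apply', ← hpre, setLIntegral_comp_mul_left g (inv_pos.2 hk), ← mul_assoc,
    ← ENNReal.ofReal_mul (inv_nonneg.2 hk.le), inv_inv, inv_mul_cancel₀ hk.ne',
    ENNReal.ofReal_one, one_mul]

lemma prod_withDensity_setOf_mul_le {f g : ℝ → ℝ≥0∞} (hf : Measurable f) (hg : Measurable g)
    (hf0 : ∀ x ≤ 0, f x = 0) (hg0 : ∀ y ≤ 0, g y = 0) {c : ℝ} (hc : 0 < c) (θ : ℝ) :
    ((volume.withDensity f).prod (volume.withDensity g)) {p | c * p.1 * p.2 ≤ θ} =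
      ∫⁻ t in Ioc 0 θ, ∫⁻ x in Ioi 0, f x * ENNReal.ofReal (c * x)⁻¹ * g ((c * x)⁻¹ * t) := by
  have hS : MeasurableSet {p : ℝ × ℝ | c * p.1 * p.2 ≤ θ} :=
    measurableSet_le (by fun_prop) measurable_const
  calc _ = ∫⁻ x, f x * volume.withDensity g {y | c * x * y ≤ θ} := by
        rw [Measure.prod_apply hS,
          lintegral_withDensity_eq_lintegral_mul _ hf (measurable_measure_prodMk_left hS)]
        rfl
    _ = ∫⁻ x in Ioi 0, f x * volume.withDensity g {y | c * x * y ≤ θ} := by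
        refine (setLIntegral_eq_of_support_subset fun x hx => ?_).symm
        by_contra hx0
        exact hx (show f x * _ = 0 by rw [hf0 x (not_lt.1 hx0), zero_mul])
    _ = ∫⁻ x in Ioi 0, ∫⁻ t in Iic θ, f x * ENNReal.ofReal (c * x)⁻¹ * g ((c * x)⁻¹ * t) := by
        refine setLIntegral_congr_fun measurableSet_Ioi fun x hx => ?_
        rw [withDensity_setOf_mul_le g (mul_pos hc hx), ← mul_assoc,
          lintegral_const_mul _ (by fun_prop)]
    _ = ∫⁻ t in Iic θ, ∫⁻ x in Ioi 0, f x * ENNReal.ofReal (c * x)⁻¹ * g ((c * x)⁻¹ * t) :=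
        lintegral_lintegral_swap (by fun_prop)
    _ = _ := by
        rw [← Ioi_inter_Iic, ← setLIntegral_indicator measurableSet_Ioi, indicator_eq_self.2]
        intro t ht
        by_contra ht0
        have hvanish : ∀ x ∈ Ioi (0 : ℝ), f x * ENNReal.ofReal (c * x)⁻¹ * g ((c * x)⁻¹ * t) = 0 :=
          fun x hx => by
            have : 0 < c * x := mul_pos hc hx
            rw [hg0 _ (mul_nonpos_of_nonneg_of_nonpos (by positivity) (not_lt.1 ht0)), mul_zero]
        exact ht ((setLIntegral_congr_fun measurableSet_Ioi hvanish).trans lintegral_zero)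

lemma inv_mul_exp_neg_div_le {c x : ℝ} (hc : 0 < c) (hx : 0 < x) : x⁻¹ * exp (-c / x) ≤ c⁻¹ := by
  have hexp : c / x ≤ exp (c / x) := (le_add_of_nonneg_right zero_le_one).trans (add_one_le_exp _)
  rw [neg_div, exp_neg, ← mul_inv, inv_le_inv₀ (by positivity) hc]
  exact (div_le_iff₀' hx).1 hexp

lemma integrableOn_inv_mul_exp_neg_div_sub_div {c t : ℝ} (hc : 0 < c) (ht : 0 < t) :
    IntegrableOn (fun x => x⁻¹ * exp (-c / x - x / t)) (Ioi 0) := by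
  refine ((exp_neg_integrableOn_Ioi 0 (inv_pos.2 ht)).const_mul c⁻¹).mono'
    (by fun_prop : Measurable _).aestronglyMeasurable ?_
  filter_upwards [ae_restrict_mem measurableSet_Ioi] with x (hx : 0 < x)
  rw [norm_of_nonneg (by positivity), sub_eq_add_neg, exp_add, ← mul_assoc,
    show -(x / t) = -t⁻¹ * x by ring]
  exact mul_le_mul_of_nonneg_right (inv_mul_exp_neg_div_le hc hx) (exp_nonneg _)

lemma measurable_invGammaPDF (a b : ℝ) : Measurable (invGammaPDF a b) :=
  Measurable.ite measurableSet_Ioi (by fun_prop) measurable_const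

lemma invGammaPDF_of_nonpos (a b : ℝ) {x : ℝ} (hx : x ≤ 0) : invGammaPDF a b x = 0 :=
  if_neg hx.not_gt

lemma invGammaPDF_nonneg {a b : ℝ} (ha : 0 < a) (hb : 0 ≤ b) (x : ℝ) : 0 ≤ invGammaPDF a b x := by
  unfold invGammaPDF
  split_ifs
  · have := Gamma_pos_of_pos ha
    positivity
  · rfl

lemma invGammaPDF_mul_invGammaPDF_scaled (a : ℝ) {c t x : ℝ} (hc : 0 < c) (ht : 0 < t)
    (hx : 0 < x) :
    invGammaPDF a 1 x * (c * x)⁻¹ * invGammaPDF a 1 ((c * x)⁻¹ * t) =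
      c ^ a / Gamma a ^ 2 * t ^ (-a - 1) * (c * ((c * x)⁻¹ * exp (-c / (c * x) - c * x / t))) := by
  have hcx : 0 < c * x := mul_pos hc hx
  have hpow : x ^ (-(a + 1)) * ((c * x)⁻¹ * t) ^ (-(a + 1)) = c ^ a * c * t ^ (-a - 1) := by
    rw [← mul_rpow hx.le (by positivity), show x * ((c * x)⁻¹ * t) = c⁻¹ * t by field_simp,
      mul_rpow (by positivity) ht.le, inv_rpow hc.le, ← rpow_neg hc.le, neg_neg,
      rpow_add_one hc.ne', neg_add']
  have hexp : exp (-1 / x) * exp (-1 / ((c * x)⁻¹ * t)) = exp (-c / (c * x) - c * x / t) := by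
    rw [← exp_add]
    congr 1
    field_simp
    ring
  simp only [invGammaPDF, if_pos hx, if_pos (mul_pos (inv_pos.2 hcx) ht), one_rpow]
  calc _ = (x ^ (-(a + 1)) * ((c * x)⁻¹ * t) ^ (-(a + 1))) * (exp (-1 / x) *
        exp (-1 / ((c * x)⁻¹ * t))) * (c * x)⁻¹ / Gamma a ^ 2 := by ring
    _ = _ := by
        rw [hpow, hexp]
        ring

noncomputable def invGammaScaledProdPDF (a c t : ℝ) : ℝ :=
  c ^ a / Gamma a ^ 2 * t ^ (-a - 1) * ∫ x in Ioi 0, x⁻¹ * exp (-c / x - x / t)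

lemma measurable_invGammaScaledProdPDF (a c : ℝ) : Measurable (invGammaScaledProdPDF a c) := by
  have hint : StronglyMeasurable fun p : ℝ × ℝ => p.2⁻¹ * exp (-c / p.2 - p.2 / p.1) :=
    (by fun_prop : Measurable _).stronglyMeasurable
  exact (by fun_prop : Measurable fun t : ℝ => c ^ a / Gamma a ^ 2 * t ^ (-a - 1)).mul
    hint.integral_prod_right'.measurable

lemma invGammaScaledProdPDF_nonneg {a c t : ℝ} (hc : 0 < c) (ht : 0 < t) :
    0 ≤ invGammaScaledProdPDF a c t := by
  have hint : 0 ≤ ∫ x in Ioi 0, x⁻¹ * exp (-c / x - x / t) :=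
    setIntegral_nonneg measurableSet_Ioi fun x (hx : 0 < x) => by positivity
  unfold invGammaScaledProdPDF
  positivity

lemma lintegral_invGammaPDF_mul_invGammaPDF_scaled {a c t : ℝ} (ha : 0 < a) (hc : 0 < c)
    (ht : 0 < t) :
    ∫⁻ x in Ioi 0, ENNReal.ofReal (invGammaPDF a 1 x) * ENNReal.ofReal (c * x)⁻¹ *
        ENNReal.ofReal (invGammaPDF a 1 ((c * x)⁻¹ * t)) =
      ENNReal.ofReal (invGammaScaledProdPDF a c t) := by
  set K := c ^ a / Gamma a ^ 2 * t ^ (-a - 1)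
  set h : ℝ → ℝ := fun u => u⁻¹ * exp (-c / u - u / t)
  have hK : 0 ≤ K := by positivity
  have hpdf := invGammaPDF_nonneg ha zero_le_one
  calc _ = ∫⁻ x in Ioi 0, ENNReal.ofReal K * (ENNReal.ofReal c * ENNReal.ofReal (h (c * x))) := by
        refine setLIntegral_congr_fun measurableSet_Ioi fun x (hx : 0 < x) => ?_
        rw [← ENNReal.ofReal_mul (hpdf x),
          ← ENNReal.ofReal_mul (mul_nonneg (hpdf x) (by positivity)),
          invGammaPDF_mul_invGammaPDF_scaled a hc ht hx, ENNReal.ofReal_mul hK,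
          ENNReal.ofReal_mul hc.le]
    _ = ENNReal.ofReal K * ∫⁻ u in Ioi 0, ENNReal.ofReal (h u) := by
        have hscale : ∫⁻ x in Ioi 0, ENNReal.ofReal (h (c * x)) =
            ENNReal.ofReal c⁻¹ * ∫⁻ u in Ioi 0, ENNReal.ofReal (h u) := by
          simpa only [preimage_const_mul_Ioi₀ _ hc, zero_div] using
            setLIntegral_comp_mul_left (fun u => ENNReal.ofReal (h u)) hc (Ioi 0)
        rw [lintegral_const_mul _ (by fun_prop), lintegral_const_mul _ (by fun_prop), hscale,
          ← mul_assoc (ENNReal.ofReal c), ← ENNReal.ofReal_mul hc.le, mul_inv_cancel₀ hc.ne',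
          ENNReal.ofReal_one, one_mul]
    _ = _ := by
        rw [← ofReal_integral_eq_lintegral_ofReal (integrableOn_inv_mul_exp_neg_div_sub_div hc ht),
          ← ENNReal.ofReal_mul hK]
        · rfl
        · filter_upwards [ae_restrict_mem measurableSet_Ioi] with x (hx : 0 < x)
          positivity

/-- the CDF of `c·ϑ·ϑ'`, for `ϑ, ϑ'` independent `Inv-Ga(a, 1)` variables,
is given by integrating the density
`θ ↦ (c^a/Γ(a)²) θ^{-a-1} ∫_0^∞ x⁻¹ e^{-c/x - x/θ} dx` over `(0, θ]`. -/
theorem invGamma_product_scaled_density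
    {Ω : Type*} [MeasureSpace Ω] [IsProbabilityMeasure (ℙ : Measure Ω)]
    (a c : ℝ) (ha : 0 < a) (hc : 0 < c)
    (ϑ ϑ' : Ω → ℝ) (hmeas : Measurable ϑ) (hmeas' : Measurable ϑ')
    (hindep : IndepFun ϑ ϑ' ℙ)
    (hlaw : Measure.map ϑ ℙ = invGammaMeasure a 1)
    (hlaw' : Measure.map ϑ' ℙ = invGammaMeasure a 1) :
    ∀ θ : ℝ, 0 < θ →
      (ℙ {ω | c * ϑ ω * ϑ' ω ≤ θ}).toReal =
        ∫ t in Set.Ioc (0 : ℝ) θ,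
          c ^ a / Real.Gamma a ^ 2 * t ^ (-a - 1) *
            ∫ x in Set.Ioi (0 : ℝ), x⁻¹ * Real.exp (-c / x - x / t) := by
  intro θ _
  have hpdf : Measurable fun x => ENNReal.ofReal (invGammaPDF a 1 x) :=
    (measurable_invGammaPDF a 1).ennreal_ofReal
  have hpdf0 : ∀ x ≤ 0, ENNReal.ofReal (invGammaPDF a 1 x) = 0 := fun x hx => by
    rw [invGammaPDF_of_nonpos a 1 hx, ENNReal.ofReal_zero]
  have hS : MeasurableSet {p : ℝ × ℝ | c * p.1 * p.2 ≤ θ} :=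
    measurableSet_le (by fun_prop) measurable_const
  calc (ℙ {ω | c * ϑ ω * ϑ' ω ≤ θ}).toReal
      = (((invGammaMeasure a 1).prod (invGammaMeasure a 1)) {p | c * p.1 * p.2 ≤ θ}).toReal := by
        have hpair := hindep.measure_preimage_pair hmeas hmeas' hS
        rw [hlaw, hlaw'] at hpair
        exact congrArg ENNReal.toReal hpair
    _ = (∫⁻ t in Ioc 0 θ, ENNReal.ofReal (invGammaScaledProdPDF a c t)).toReal := by
        rw [invGammaMeasure, prod_withDensity_setOf_mul_le hpdf hpdf hpdf0 hpdf0 hc,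
          setLIntegral_congr_fun measurableSet_Ioc fun t ht =>
            lintegral_invGammaPDF_mul_invGammaPDF_scaled ha hc ht.1]
    _ = ∫ t in Ioc 0 θ, invGammaScaledProdPDF a c t := by
        refine (integral_eq_lintegral_of_nonneg_ae ?_
          (measurable_invGammaScaledProdPDF a c).aestronglyMeasurable).symm
        filter_upwards [ae_restrict_mem measurableSet_Ioc] with t ht
        exact invGammaScaledProdPDF_nonneg hc ht.1
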